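/- For ε < -1/15, the equation ε = (4x² - 3x)/(10 - 5x) has no solution x satisfying 3/4 + (15/4)ε < x < 3/4 + (5/4)ε (equivalently, (4/5)x - 3/5 < ε < (4/15)x - 1/5). -/

import Mathlib

/-!
The two boundary lines of the sliding region force `x < 2/3`, so the denominator of
`ε = (4x² - 3x)/(10 - 5x)` is positive, and clearing it turns both remaining conditions into
quadratic inequalities in `x`: the lower boundary `3/4 + (15/4)ε < x` becomes
`(4x - 3)(2x - 1) < 0`, i.e. `1/2 < x < 3/4`, while `ε < -1/15` becomes
`(3x - 1)(2x - 1) < 0`, i.e. `1/3 < x < 1/2`. These intervals are disjoint.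
-/

section

variable {x : ℝ}

theorem fifteen_mul_div_lt_iff (hx : x < 2) :
    15 * ((4 * x ^ 2 - 3 * x) / (10 - 5 * x)) < 4 * x - 3 ↔ x ∈ Set.Ioo (1/2) (3/4) := by
  have hd : 0 < 10 - 5 * x := by linarith
  rw [mul_div_assoc', div_lt_iff₀ hd, Set.mem_Ioo]
  constructor
  · intro h
    have hneg : (4 * x - 3) * (2 * x - 1) < 0 := by nlinarith
    rcases mul_neg_iff.1 hneg with ⟨_, _⟩ | ⟨_, _⟩ <;> constructor <;> linarith
  · rintro ⟨h_half, h_three_quarters⟩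
    nlinarith

theorem div_lt_neg_one_fifteenth_iff (hx : x < 2) :
    (4 * x ^ 2 - 3 * x) / (10 - 5 * x) < -1/15 ↔ x ∈ Set.Ioo (1/3) (1/2) := by
  have hd : 0 < 10 - 5 * x := by linarith
  rw [div_lt_iff₀ hd, Set.mem_Ioo]
  constructor
  · intro h
    have hneg : (3 * x - 1) * (2 * x - 1) < 0 := by nlinarith
    rcases mul_neg_iff.1 hneg with ⟨_, _⟩ | ⟨_, _⟩ <;> constructor <;> linarith
  · rintro ⟨h_third, h_half⟩
    nlinarith

end

/-- For ε < -1/15, there is no x in the sliding region with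
ε = (4x² - 3x)/(10 - 5x). -/
theorem welander_no_pseudoeq (ε : ℝ) (hε : ε < -1/15) :
    ¬ ∃ x : ℝ, 3/4 + 15/4 * ε < x ∧ x < 3/4 + 5/4 * ε ∧
      ε = (4 * x ^ 2 - 3 * x) / (10 - 5 * x) := by
  rintro ⟨x, h_lower, h_upper, rfl⟩
  have hx : x < 2 := by linarith
  have h_gt_half : 1/2 < x := ((fifteen_mul_div_lt_iff hx).1 (by linarith)).1
  have h_lt_half : x < 1/2 := ((div_lt_neg_one_fifteenth_iff hx).1 hε).2
  linarith
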